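/- Define f(ρ, θ, φ) = (e^{2ρ cos θ} + e^{2ρ cos(θ−φ)}) / (e^{ρ cos θ} + e^{ρ cos(θ−φ)})² for real ρ, θ, φ. Then for every ρ ≥ 0 and all 0 ≤ φ₁ ≤ φ₂ ≤ π, one has ∫₀^{2π} f(ρ, θ, φ₁) dθ ≤ ∫₀^{2π} f(ρ, θ, φ₂) dθ; in particular, the angular integral φ ↦ ∫₀^{2π} f(ρ, θ, φ) dθ attains its maximum over φ ∈ [0, π/2] at φ = π/2. -/
import Mathlib


open Real

/-- The polar-coordinate integrand arising from the variance of the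
two-center softmax projection. -/
noncomputable def f (ρ θ φ : ℝ) : ℝ :=
  (exp (2 * ρ * cos θ) + exp (2 * ρ * cos (θ - φ))) /
    (exp (ρ * cos θ) + exp (ρ * cos (θ - φ))) ^ 2

noncomputable def h (x : ℝ) : ℝ := 1 - 1 / (Real.cosh x + 1)

lemma cosh_add_one_pos (x : ℝ) : 0 < Real.cosh x + 1 := by
  nlinarith [Real.cosh_pos x]

lemma h_cont : Continuous h := by
  apply Continuous.sub continuous_const
  exact Continuous.div continuous_const (by continuity)
    (fun x => ne_of_gt (cosh_add_one_pos x))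

lemma h_neg (x : ℝ) : h (-x) = h x := by unfold h; rw [Real.cosh_neg]

lemma h_mono {x y : ℝ} (hxy : |x| ≤ |y|) : h x ≤ h y := by
  have hc : Real.cosh x ≤ Real.cosh y := Real.cosh_le_cosh.2 hxy
  have h1 := cosh_add_one_pos x
  have h2 := cosh_add_one_pos y
  have : 1 / (Real.cosh y + 1) ≤ 1 / (Real.cosh x + 1) :=
    one_div_le_one_div_of_le h1 (by linarith)
  unfold h; linarith

lemma f_eq (ρ θ φ : ℝ) : f ρ θ φ = h (ρ * cos θ - ρ * cos (θ - φ)) := by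
  have hA : 0 < exp (ρ * cos θ) := exp_pos _
  have hB : 0 < exp (ρ * cos (θ - φ)) := exp_pos _
  have e2a : exp (2 * ρ * cos θ) = exp (ρ * cos θ) ^ 2 := by
    rw [sq, ← Real.exp_add]; ring_nf
  have e2b : exp (2 * ρ * cos (θ - φ)) = exp (ρ * cos (θ - φ)) ^ 2 := by
    rw [sq, ← Real.exp_add]; ring_nf
  unfold f h
  rw [Real.cosh_eq, e2a, e2b, Real.exp_sub,
    (show -(ρ * cos θ - ρ * cos (θ - φ)) = ρ * cos (θ - φ) - ρ * cos θ by ring),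
    Real.exp_sub]
  have hAB : (0:ℝ) < exp (ρ * cos θ) + exp (ρ * cos (θ - φ)) := by positivity
  field_simp
  ring

lemma hc_int (c a b : ℝ) :
    IntervalIntegrable (fun θ => h (c * sin θ)) MeasureTheory.volume a b :=
  (h_cont.comp (continuous_const.mul Real.continuous_sin)).intervalIntegrable a b

lemma g_mono {c₁ c₂ : ℝ} (h0 : 0 ≤ c₁) (h12 : c₁ ≤ c₂) :
    (∫ θ in (0:ℝ)..(2 * π), h (c₁ * sin θ)) ≤ ∫ θ in (0:ℝ)..(2 * π), h (c₂ * sin θ) := by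
  apply intervalIntegral.integral_mono_on (by positivity) (hc_int _ _ _) (hc_int _ _ _)
  intro θ _
  apply h_mono
  rw [abs_mul, abs_mul]
  gcongr

lemma integral_f_eq (ρ φ : ℝ) :
    (∫ θ in (0:ℝ)..(2 * π), f ρ θ φ)
      = ∫ θ in (0:ℝ)..(2 * π), h (2 * ρ * sin (φ / 2) * sin θ) := by
  have step1 : ∀ θ : ℝ, f ρ θ φ = h (2 * ρ * sin (φ / 2) * sin (θ - φ / 2)) := by
    intro θ
    rw [f_eq, ← mul_sub, Real.cos_sub_cos]
    rw [show (θ + (θ - φ)) / 2 = θ - φ / 2 by ring, show (θ - (θ - φ)) / 2 = φ / 2 by ring]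
    rw [show ρ * (-2 * sin (θ - φ / 2) * sin (φ / 2))
        = -(2 * ρ * sin (φ / 2) * sin (θ - φ / 2)) by ring, h_neg]
  have hper : Function.Periodic (fun θ => h (2 * ρ * sin (φ / 2) * sin θ)) (2 * π) := by
    intro x
    simp [Real.sin_add_two_pi]
  calc (∫ θ in (0:ℝ)..(2 * π), f ρ θ φ)
      = ∫ θ in (0:ℝ)..(2 * π), h (2 * ρ * sin (φ / 2) * sin (θ - φ / 2)) := by
        simp_rw [step1]
    _ = ∫ θ in (0 - φ / 2)..(2 * π - φ / 2), h (2 * ρ * sin (φ / 2) * sin θ) := by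
        exact intervalIntegral.integral_comp_sub_right
          (fun θ => h (2 * ρ * sin (φ / 2) * sin θ)) (φ / 2)
    _ = ∫ θ in (-(φ/2))..(-(φ/2) + 2 * π), h (2 * ρ * sin (φ / 2) * sin θ) := by
        norm_num; ring_nf
    _ = ∫ θ in (0:ℝ)..(0 + 2 * π), h (2 * ρ * sin (φ / 2) * sin θ) :=
        hper.intervalIntegral_add_eq (-(φ/2)) 0
    _ = ∫ θ in (0:ℝ)..(2 * π), h (2 * ρ * sin (φ / 2) * sin θ) := by norm_num

theorem angular_integral_monotone (ρ : ℝ) (hρ : 0 ≤ ρ) :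
    (∀ φ₁ φ₂ : ℝ, 0 ≤ φ₁ → φ₁ ≤ φ₂ → φ₂ ≤ π →
        (∫ θ in (0:ℝ)..(2 * π), f ρ θ φ₁) ≤ ∫ θ in (0:ℝ)..(2 * π), f ρ θ φ₂) ∧
      ∀ φ ∈ Set.Icc (0:ℝ) (π / 2),
        (∫ θ in (0:ℝ)..(2 * π), f ρ θ φ) ≤ ∫ θ in (0:ℝ)..(2 * π), f ρ θ (π / 2) := by
  have main : ∀ φ₁ φ₂ : ℝ, 0 ≤ φ₁ → φ₁ ≤ φ₂ → φ₂ ≤ π →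
      (∫ θ in (0:ℝ)..(2 * π), f ρ θ φ₁) ≤ ∫ θ in (0:ℝ)..(2 * π), f ρ θ φ₂ := by
    intro φ₁ φ₂ h0 h12 h2
    rw [integral_f_eq, integral_f_eq]
    have hs1 : 0 ≤ sin (φ₁ / 2) := Real.sin_nonneg_of_nonneg_of_le_pi (by linarith)
      (by nlinarith [Real.pi_pos])
    have hs12 : sin (φ₁ / 2) ≤ sin (φ₂ / 2) := by
      apply Real.strictMonoOn_sin.monotoneOn
      · constructor <;> [linarith [Real.pi_pos]; linarith]
      · constructor <;> [linarith [Real.pi_pos]; linarith]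
      · linarith
    exact g_mono (by positivity) (by nlinarith)
  refine ⟨main, fun φ hφ => ?_⟩
  exact main φ (π/2) hφ.1 hφ.2 (by linarith [Real.pi_pos])
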